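/- Let H be a separable real Hilbert space, let B₁ and B₂ be bounded linear operators on H, let a, w ∈ H, and for j = 1, 2 let λⱼ = αⱼ + iβⱼ be complex numbers with αⱼ ≥ 0 and βⱼ ≠ 0. Then |ψ(λ₁, λ₂; w)| = exp( ∑_{j=1}^{2} ( −(αⱼ/(2(αⱼ² + βⱼ²))) · ‖Bⱼ w‖² + (βⱼ/|βⱼ|) · √((√(αⱼ² + βⱼ²) − αⱼ)/(2(αⱼ² + βⱼ²))) · ⟨Bⱼ w, a⟩ ) ). -/

import Mathlib

open scoped RealInnerProductSpace

/-!
Since `‖exp ζ‖ = exp (Re ζ)`, only the real part of each summand matters. For `β ≠ 0` the principal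
square root of `z = α + iβ` has imaginary part `sign β · √((|z| - α)/2)` and squared modulus `|z|`,
so `Im z^{-1/2} = -Im z^{1/2} / |z|`; the real part of `-c²/(2z)` is `-α c² / (2|z|²)`.
-/

namespace Complex

lemma cpow_inv_two_im_eq_div_abs_mul_sqrt {z : ℂ} (hz : z.im ≠ 0) :
    (z ^ (2⁻¹ : ℂ)).im = z.im / |z.im| * √((‖z‖ - z.re) / 2) := by
  rcases hz.lt_or_gt with h | h
  · rw [cpow_inv_two_im_eq_neg_sqrt h, abs_of_neg h, div_neg, div_self h.ne, neg_one_mul]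
  · rw [cpow_inv_two_im_eq_sqrt h.le, abs_of_pos h, div_self h.ne', one_mul]

lemma normSq_cpow_inv_two (z : ℂ) : normSq (z ^ (2⁻¹ : ℂ)) = ‖z‖ := by
  rw [normSq_eq_norm_sq, ← ofReal_ofNat, ← ofReal_inv, norm_cpow_real, ← one_div,
    ← Real.sqrt_eq_rpow, Real.sq_sqrt (norm_nonneg z)]

lemma cpow_neg_one_div_two_im (z : ℂ) :
    (z ^ (-(1 : ℂ) / 2)).im = -(z ^ (2⁻¹ : ℂ)).im / ‖z‖ := by
  rw [neg_div, one_div, cpow_neg, inv_im, normSq_cpow_inv_two]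

lemma re_neg_sq_div_two_mul_add_I_mul_cpow_mul (c d : ℝ) {z : ℂ} (hz : z.im ≠ 0) :
    (-(c : ℂ) ^ 2 / (2 * z) + I * z ^ (-(1 : ℂ) / 2) * d).re
      = -(z.re / (2 * normSq z)) * c ^ 2
        + z.im / |z.im| * √((‖z‖ - z.re) / (2 * normSq z)) * d := by
  have hsqrt : √((‖z‖ - z.re) / 2) / ‖z‖ = √((‖z‖ - z.re) / (2 * normSq z)) := by
    rw [normSq_eq_norm_sq, ← div_div, Real.sqrt_div' _ (sq_nonneg _),
      Real.sqrt_sq (norm_nonneg z)]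
  have hre : (-(c : ℂ) ^ 2 / (2 * z)).re = -(z.re / (2 * normSq z)) * c ^ 2 := by
    rw [show -(c : ℂ) ^ 2 / (2 * z) = ((-c ^ 2 / 2 : ℝ) : ℂ) * z⁻¹ by push_cast; ring,
      re_ofReal_mul, inv_re]
    ring
  have hlin : (I * z ^ (-(1 : ℂ) / 2) * d).re = -(z ^ (-(1 : ℂ) / 2)).im * d := by
    simp [mul_re]
  rw [add_re, hre, hlin, cpow_neg_one_div_two_im, cpow_inv_two_im_eq_div_abs_mul_sqrt hz, ← hsqrt]
  ring

end Complex

theorem stmt6 {H : Type*} [NormedAddCommGroup H] [InnerProductSpace ℝ H]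
    (B₁ B₂ : H →L[ℝ] H) (a w : H)
    (α₁ β₁ α₂ β₂ : ℝ) (hβ₁ : β₁ ≠ 0) (hβ₂ : β₂ ≠ 0)
    (l₁ l₂ : ℂ) (h₁ : l₁ = (α₁ : ℂ) + (β₁ : ℂ) * Complex.I)
    (h₂ : l₂ = (α₂ : ℂ) + (β₂ : ℂ) * Complex.I) :
    ‖(Complex.exp
        ((-((‖B₁ w‖ : ℂ) ^ 2) / (2 * l₁)
            + Complex.I * l₁ ^ (-(1 : ℂ) / 2) * ((⟪B₁ w, a⟫ : ℝ) : ℂ))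
          + (-((‖B₂ w‖ : ℂ) ^ 2) / (2 * l₂)
            + Complex.I * l₂ ^ (-(1 : ℂ) / 2) * ((⟪B₂ w, a⟫ : ℝ) : ℂ))))‖
    = Real.exp
        ((-(α₁ / (2 * (α₁ ^ 2 + β₁ ^ 2))) * ‖B₁ w‖ ^ 2
            + (β₁ / |β₁|)
              * Real.sqrt ((Real.sqrt (α₁ ^ 2 + β₁ ^ 2) - α₁) / (2 * (α₁ ^ 2 + β₁ ^ 2)))
              * ⟪B₁ w, a⟫)
          + (-(α₂ / (2 * (α₂ ^ 2 + β₂ ^ 2))) * ‖B₂ w‖ ^ 2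
            + (β₂ / |β₂|)
              * Real.sqrt ((Real.sqrt (α₂ ^ 2 + β₂ ^ 2) - α₂) / (2 * (α₂ ^ 2 + β₂ ^ 2)))
              * ⟪B₂ w, a⟫)) := by
  subst h₁ h₂
  rw [Complex.norm_exp, Complex.add_re,
    Complex.re_neg_sq_div_two_mul_add_I_mul_cpow_mul _ _ (by simpa using hβ₁),
    Complex.re_neg_sq_div_two_mul_add_I_mul_cpow_mul _ _ (by simpa using hβ₂)]
  simp [Complex.normSq_add_mul_I, Complex.norm_add_mul_I]
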